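/- If the 4×4 real matrix N₂ = [[R(θ), b],[0, R(θ)]] with θ ∈ (0,π) ∪ (π,2π) and b a real 2×2 matrix satisfies N₂^k = I for some positive integer k, then b₂ = b₃, where b = [[b₁, b₂],[b₃, b₄]]. Equivalently, no matrix N₂(θ,b) with b₂ ≠ b₃ can satisfy N₂^k = I. -/
import Mathlib


open Matrix

private lemma rot_mul_rot (x y : ℝ) :
    !![Real.cos x, -Real.sin x; Real.sin x, Real.cos x] *
      !![Real.cos y, -Real.sin y; Real.sin y, Real.cos y] =
    !![Real.cos (x+y), -Real.sin (x+y); Real.sin (x+y), Real.cos (x+y)] := by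
  ext i j
  fin_cases i <;> fin_cases j <;>
    simp [Matrix.mul_apply, Fin.sum_univ_two, Real.cos_add, Real.sin_add] <;> ring

private lemma pow_N2_form (θ : ℝ) (b : Matrix (Fin 2) (Fin 2) ℝ) : ∀ n : ℕ,
    ∃ B : Matrix (Fin 2) (Fin 2) ℝ,
      (Matrix.fromBlocks
        !![Real.cos θ, -Real.sin θ; Real.sin θ, Real.cos θ] b 0
        !![Real.cos θ, -Real.sin θ; Real.sin θ, Real.cos θ]) ^ (n+1)
      = Matrix.fromBlocks
          !![Real.cos (((n:ℝ)+1)*θ), -Real.sin (((n:ℝ)+1)*θ);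
             Real.sin (((n:ℝ)+1)*θ), Real.cos (((n:ℝ)+1)*θ)] B 0
          !![Real.cos (((n:ℝ)+1)*θ), -Real.sin (((n:ℝ)+1)*θ);
             Real.sin (((n:ℝ)+1)*θ), Real.cos (((n:ℝ)+1)*θ)]
      ∧ B 0 0 + B 1 1 = ((n:ℝ)+1) *
          ((b 0 0 + b 1 1) * Real.cos ((n:ℝ)*θ) - (b 1 0 - b 0 1) * Real.sin ((n:ℝ)*θ))
      ∧ B 0 1 - B 1 0 = -(((n:ℝ)+1) *
          ((b 0 0 + b 1 1) * Real.sin ((n:ℝ)*θ) + (b 1 0 - b 0 1) * Real.cos ((n:ℝ)*θ))) := by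
  intro n
  induction n with
  | zero =>
      refine ⟨b, ?_, by norm_num, by norm_num⟩
      norm_num
  | succ n ih =>
      obtain ⟨B, hB, hu, hv⟩ := ih
      refine ⟨!![Real.cos (((n:ℝ)+1)*θ), -Real.sin (((n:ℝ)+1)*θ);
             Real.sin (((n:ℝ)+1)*θ), Real.cos (((n:ℝ)+1)*θ)] * b +
             B * !![Real.cos θ, -Real.sin θ; Real.sin θ, Real.cos θ], ?_, ?_, ?_⟩
      · rw [pow_succ, hB, Matrix.fromBlocks_multiply]
        have harg : ((n:ℝ)+1)*θ + θ = (((n+1:ℕ):ℝ)+1)*θ := by push_cast; ring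
        simp only [Matrix.zero_mul, Matrix.mul_zero, add_zero, zero_add,
          rot_mul_rot, harg]
      · push_cast
        have e : ((n:ℝ)+1)*θ = (n:ℝ)*θ + θ := by ring
        simp only [e, Real.cos_add, Real.sin_add, Matrix.add_apply, Matrix.mul_apply,
          Fin.sum_univ_two, Matrix.of_apply, Matrix.cons_val', Matrix.cons_val_zero,
          Matrix.cons_val_one, Matrix.head_cons, Matrix.head_fin_const,
          Matrix.empty_val', Matrix.cons_val_fin_one]
        linear_combination Real.cos θ * hu + Real.sin θ * hv
      · push_cast
        have e : ((n:ℝ)+1)*θ = (n:ℝ)*θ + θ := by ring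
        simp only [e, Real.cos_add, Real.sin_add, Matrix.add_apply, Matrix.mul_apply,
          Fin.sum_univ_two, Matrix.of_apply, Matrix.cons_val', Matrix.cons_val_zero,
          Matrix.cons_val_one, Matrix.head_cons, Matrix.head_fin_const,
          Matrix.empty_val', Matrix.cons_val_fin_one]
        linear_combination Real.cos θ * hv - Real.sin θ * hu

/-- if N₂ = [[R(θ), b],[0, R(θ)]] with θ ∈ (0,π)∪(π,2π) satisfies
N₂^k = I for some k > 0, then b₂ = b₃ (i.e. b 0 1 = b 1 0). -/
theorem basic_normal_form_N2_not_finite_order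
    (θ : ℝ) (hθ : θ ∈ Set.Ioo 0 Real.pi ∪ Set.Ioo Real.pi (2 * Real.pi))
    (b : Matrix (Fin 2) (Fin 2) ℝ) (k : ℕ) (hk : 0 < k)
    (hN : (Matrix.fromBlocks
        !![Real.cos θ, -Real.sin θ; Real.sin θ, Real.cos θ] b 0
        !![Real.cos θ, -Real.sin θ; Real.sin θ, Real.cos θ]) ^ k = 1) :
    b 0 1 = b 1 0 := by
  obtain ⟨m, rfl⟩ := Nat.exists_eq_succ_of_ne_zero hk.ne'
  obtain ⟨B, hB, hu, hv⟩ := pow_N2_form θ b m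
  rw [hB] at hN
  have h00 : B 0 0 = 0 := by
    have := congrFun (congrFun hN (Sum.inl 0)) (Sum.inr 0)
    simpa [Matrix.one_apply] using this
  have h11 : B 1 1 = 0 := by
    have := congrFun (congrFun hN (Sum.inl 1)) (Sum.inr 1)
    simpa [Matrix.one_apply] using this
  have h01 : B 0 1 = 0 := by
    have := congrFun (congrFun hN (Sum.inl 0)) (Sum.inr 1)
    simpa [Matrix.one_apply] using this
  have h10 : B 1 0 = 0 := by
    have := congrFun (congrFun hN (Sum.inl 1)) (Sum.inr 0)
    simpa [Matrix.one_apply] using this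
  rw [h00, h11] at hu
  rw [h01, h10] at hv
  have hm : ((m:ℝ)+1) ≠ 0 := by positivity
  set p := b 0 0 + b 1 1
  set q := b 1 0 - b 0 1
  set c := Real.cos ((m:ℝ)*θ)
  set s := Real.sin ((m:ℝ)*θ)
  have hX : p * c - q * s = 0 := by
    have : ((m:ℝ)+1) * (p * c - q * s) = 0 := by linarith [hu]
    exact (mul_eq_zero.mp this).resolve_left hm
  have hY : p * s + q * c = 0 := by
    have : ((m:ℝ)+1) * (p * s + q * c) = 0 := by linarith [hv]
    exact (mul_eq_zero.mp this).resolve_left hm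
  have hP : s^2 + c^2 = 1 := Real.sin_sq_add_cos_sq _
  have : b 0 1 - b 1 0 = 0 := by
    linear_combination s * hX - c * hY + (b 1 0 - b 0 1) * hP
  linarith
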